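/- Let F be a finite field of odd cardinality q containing an element i with i² = −1, and let H be the subgroup of PSL₂(F) consisting of the classes of all upper triangular matrices [[u, x],[0, u⁻¹]] with u, x ∈ F and u⁴ = 1. For v ∈ F let ḡ_v ∈ PSL₂(F) denote the class of the matrix [[0, −1],[1, −v]] ∈ SL₂(F). If v, z ∈ F satisfy ḡ_v⁻¹ H ḡ_v = ḡ_z⁻¹ H ḡ_z (as subgroups of PSL₂(F)), then v = z. -/

import Mathlib

open Matrix MatrixGroups

/-- The natural projection `SL₂(R) → PSL₂(R)`, sending a matrix to its class modulo
the center. -/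
def pslmk {R : Type*} [CommRing R] :
    Matrix.SpecialLinearGroup (Fin 2) R →* Matrix.ProjectiveSpecialLinearGroup (Fin 2) R :=
  QuotientGroup.mk' (Subgroup.center (Matrix.SpecialLinearGroup (Fin 2) R))

/-!
Conjugation by `ḡ_z ḡ_v⁻¹` maps `H` onto itself, and `g_z g_v⁻¹ = [[1, 0], [z - v, 1]]`. It
conjugates `[[1, 1], [0, 1]]`, whose class lies in `H`, to a matrix with lower left entry
`-(z - v)²`. Every element of `H` is the class of an upper triangular matrix, and being upper
triangular survives multiplication by the central scalars, so `(z - v)² = 0`.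
-/

theorem Subgroup.mul_inv_conj_mem_of_map_conj_inv_eq {G : Type*} [Group G] {H : Subgroup G}
    {a b : G} (heq : H.map (MulAut.conj a⁻¹).toMonoidHom = H.map (MulAut.conj b⁻¹).toMonoidHom)
    {h : G} (hh : h ∈ H) : b * a⁻¹ * h * (b * a⁻¹)⁻¹ ∈ H := by
  have hmem : a⁻¹ * h * a ∈ H.map (MulAut.conj b⁻¹).toMonoidHom := by
    rw [← heq, mem_map_equiv]
    simpa [mul_assoc] using hh
  rw [mem_map_equiv] at hmem
  simpa [mul_assoc] using hmem

namespace Matrix.SpecialLinearGroup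

variable {R : Type*} [CommRing R]

theorem apply_one_zero_eq_zero_of_pslmk_eq {A B : SL(2, R)} (h : pslmk A = pslmk B)
    (hB : (B : Matrix (Fin 2) (Fin 2) R) 1 0 = 0) : (A : Matrix (Fin 2) (Fin 2) R) 1 0 = 0 := by
  obtain ⟨c, hc, rfl⟩ := (QuotientGroup.mk'_eq_mk' _).mp h.symm
  obtain ⟨r, -, hr⟩ := mem_center_iff.mp hc
  simp [coe_mul, ← hr, hB]

theorem coe_mul_inv_eq_of_coe_eq {v z : R} {gv gz : SL(2, R)}
    (hgv : (gv : Matrix (Fin 2) (Fin 2) R) = !![0, -1; 1, -v])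
    (hgz : (gz : Matrix (Fin 2) (Fin 2) R) = !![0, -1; 1, -z]) :
    ((gz * gv⁻¹ : SL(2, R)) : Matrix (Fin 2) (Fin 2) R) = !![1, 0; z - v, 1] := by
  simp [coe_mul, coe_inv, hgv, hgz, adjugate_fin_two_of, sub_eq_neg_add]

theorem conj_unipotent_apply_one_zero {w T : SL(2, R)} {s x : R}
    (hw : (w : Matrix (Fin 2) (Fin 2) R) = !![1, 0; s, 1])
    (hT : (T : Matrix (Fin 2) (Fin 2) R) = !![1, x; 0, 1]) :
    ((w * T * w⁻¹ : SL(2, R)) : Matrix (Fin 2) (Fin 2) R) 1 0 = -(s ^ 2 * x) := by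
  simp [coe_mul, coe_inv, hw, hT, adjugate_fin_two_of]
  ring

end Matrix.SpecialLinearGroup

theorem conj_stab_inj_general (F : Type*) [Field F]
    (H : Subgroup (Matrix.ProjectiveSpecialLinearGroup (Fin 2) F))
    (hH : (H : Set (Matrix.ProjectiveSpecialLinearGroup (Fin 2) F)) =
      {g | ∃ u x : F, u ^ 4 = 1 ∧ ∃ h : Matrix.det !![u, x; 0, u⁻¹] = 1,
        g = pslmk ⟨!![u, x; 0, u⁻¹], h⟩})
    (v z : F) (gv gz : Matrix.SpecialLinearGroup (Fin 2) F)
    (hgv : (gv : Matrix (Fin 2) (Fin 2) F) = !![0, -1; 1, -v])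
    (hgz : (gz : Matrix (Fin 2) (Fin 2) F) = !![0, -1; 1, -z])
    (heq : Subgroup.map (MulAut.conj ((pslmk gv)⁻¹)).toMonoidHom H =
           Subgroup.map (MulAut.conj ((pslmk gz)⁻¹)).toMonoidHom H) :
    v = z := by
  have hdet : det !![(1 : F), 1; 0, 1⁻¹] = 1 := by simp [det_fin_two_of]
  set T : SL(2, F) := ⟨!![1, 1; 0, 1⁻¹], hdet⟩
  have hT : pslmk T ∈ H := (Set.ext_iff.mp hH _).mpr ⟨1, 1, one_pow 4, hdet, rfl⟩
  have hconj : pslmk (gz * gv⁻¹ * T * (gz * gv⁻¹)⁻¹) ∈ H := by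
    simpa only [map_mul, map_inv] using Subgroup.mul_inv_conj_mem_of_map_conj_inv_eq heq hT
  obtain ⟨_, _, -, _, hupper⟩ := (Set.ext_iff.mp hH _).mp hconj
  have hlower := SpecialLinearGroup.apply_one_zero_eq_zero_of_pslmk_eq hupper (by simp)
  have hTcoe : (T : Matrix (Fin 2) (Fin 2) F) = !![1, 1; 0, 1] := by simp [T]
  rw [SpecialLinearGroup.conj_unipotent_apply_one_zero
    (SpecialLinearGroup.coe_mul_inv_eq_of_coe_eq hgv hgz) hTcoe] at hlower
  have hzv : z - v = 0 := by simpa using hlower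
  exact (sub_eq_zero.mp hzv).symm

/-- Let `F` be a finite field of odd cardinality `q` containing `i` with `i² = -1`, and
let `H ≤ PSL₂(F)` consist of the classes of the matrices `[[u, x], [0, u⁻¹]]` with
`u⁴ = 1`. For `v : F` let `ḡ_v` be the class of `[[0, -1], [1, -v]]`. If
`ḡ_v⁻¹ H ḡ_v = ḡ_z⁻¹ H ḡ_z` then `v = z`. -/
theorem conj_stab_inj (F : Type*) [Field F] [Fintype F]
    (q : ℕ) (hq : Fintype.card F = q) (hodd : Odd q)
    (i : F) (hi : i ^ 2 = -1)
    (H : Subgroup (Matrix.ProjectiveSpecialLinearGroup (Fin 2) F))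
    (hH : (H : Set (Matrix.ProjectiveSpecialLinearGroup (Fin 2) F)) =
      {g | ∃ u x : F, u ^ 4 = 1 ∧ ∃ h : Matrix.det !![u, x; 0, u⁻¹] = 1,
        g = pslmk ⟨!![u, x; 0, u⁻¹], h⟩})
    (v z : F) (gv gz : Matrix.SpecialLinearGroup (Fin 2) F)
    (hgv : (gv : Matrix (Fin 2) (Fin 2) F) = !![0, -1; 1, -v])
    (hgz : (gz : Matrix (Fin 2) (Fin 2) F) = !![0, -1; 1, -z])
    (heq : Subgroup.map (MulAut.conj ((pslmk gv)⁻¹)).toMonoidHom H =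
           Subgroup.map (MulAut.conj ((pslmk gz)⁻¹)).toMonoidHom H) :
    v = z :=
  conj_stab_inj_general F H hH v z gv gz hgv hgz heq
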